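/- For a submodular monotone increasing function f on ground set E = U × I with f(∅) = 0, subject to the partition matroid constraint |P_u| ≤ N for each u, the locally greedy algorithm (processing users in arbitrary order and for each user greedily adding N elements from {u} × I maximizing marginal gain) returns a solution P with f(P) ≥ (1/2)·f(P*) where P* is an optimal solution. -/

import Mathlib

/-!
Let `G` be the greedy output and `Q` feasible. By monotonicity and submodularity,
`f Q ≤ f (G ∪ Q) ≤ f G + ∑ x ∈ Q, Δ(x | G)`. An element `(u, j)` of `Q` outside `G` was
available to each of the `N` greedy steps for user `u`, so `Δ((u, j) | G)` is at most the gain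
of every such step; since `Q` gives `u` at most `N` elements, their marginals add up to at most
the total gain of `u`'s steps. Summed over the users, these gains telescope to `f G`.
-/

open Finset

theorem Finset.sum_le_sum_of_card_le_of_forall_le {ι κ M : Type*} [AddCommMonoid M] [LinearOrder M]
    [IsOrderedAddMonoid M] {s : Finset ι} {t : Finset κ} {g : ι → M} {c : κ → M}
    (hcard : #s ≤ #t) (hc : ∀ k ∈ t, 0 ≤ c k) (h : ∀ x ∈ s, ∀ k ∈ t, g x ≤ c k) :
    ∑ x ∈ s, g x ≤ ∑ k ∈ t, c k := by
  rcases t.eq_empty_or_nonempty with rfl | ht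
  · simp [card_eq_zero.mp (Nat.le_zero.mp hcard)]
  obtain ⟨k₀, hk₀, hmin⟩ := t.exists_min_image c ht
  calc ∑ x ∈ s, g x ≤ #s • c k₀ := sum_le_card_nsmul s g _ fun x hx => h x hx k₀ hk₀
    _ ≤ #t • c k₀ := nsmul_le_nsmul_left (hc k₀ hk₀) hcard
    _ ≤ ∑ k ∈ t, c k := card_nsmul_le_sum t c _ hmin

section Marginal

variable {α : Type*} [DecidableEq α] (f : Finset α → ℝ) {A B : Finset α} {x : α}

def marginal (A : Finset α) (x : α) : ℝ := f (insert x A) - f A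

def IsSubmodular : Prop := ∀ A B : Finset α, A ⊆ B → ∀ x ∉ B, marginal f B x ≤ marginal f A x

variable {f}

theorem marginal_of_mem (hx : x ∈ A) : marginal f A x = 0 := by
  simp [marginal, insert_eq_of_mem hx]

theorem marginal_nonneg (hmono : Monotone f) : 0 ≤ marginal f A x :=
  sub_nonneg.mpr (hmono (subset_insert x A))

theorem marginal_anti (hmono : Monotone f)
    (hsub : IsSubmodular f)
    (hAB : A ⊆ B) : marginal f B x ≤ marginal f A x := by
  by_cases hx : x ∈ B
  · exact (marginal_of_mem hx).trans_le (marginal_nonneg hmono)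
  · exact hsub A B hAB x hx

theorem le_add_sum_marginal (hmono : Monotone f)
    (hsub : IsSubmodular f)
    (A T : Finset α) : f (A ∪ T) ≤ f A + ∑ x ∈ T, marginal f A x := by
  induction T using Finset.induction_on with
  | empty => simp
  | @insert a T ha ih =>
    have hstep : marginal f (A ∪ T) a ≤ marginal f A a :=
      marginal_anti hmono hsub subset_union_left
    have hinsert : f (insert a (A ∪ T)) = f (A ∪ T) + marginal f (A ∪ T) a := by
      rw [marginal]; ring
    rw [union_insert, sum_insert ha, hinsert]
    linarith

theorem sum_marginal_le_of_greedy (hmono : Monotone f)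
    (hsub : IsSubmodular f)
    {R : Finset α} {L : List α} (hB : A ∪ L.toFinset ⊆ B) (hR : #R ≤ L.length)
    (hgreedy : ∀ k (hk : k < L.length), ∀ y ∈ R, y ∉ L.take k →
      marginal f (A ∪ (L.take k).toFinset) y ≤ marginal f (A ∪ (L.take k).toFinset) L[k]) :
    ∑ x ∈ R, marginal f B x ≤ f (A ∪ L.toFinset) - f A := by
  set S : ℕ → Finset α := fun k => A ∪ (L.take k).toFinset
  have hS : ∀ k (hk : k < L.length), S (k + 1) = insert L[k] (S k) := by
    intro k hk
    simp only [S, ← List.take_concat_get' L k hk, List.toFinset_append, List.toFinset_cons,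
      List.toFinset_nil, insert_empty, union_comm _ {L[k]}, ← insert_eq, union_insert]
  have hgain : ∀ k (hk : k < L.length), f (S (k + 1)) - f (S k) = marginal f (S k) L[k] := by
    intro k hk; rw [hS k hk]; rfl
  calc ∑ x ∈ R, marginal f B x ≤ ∑ k ∈ range L.length, (f (S (k + 1)) - f (S k)) := by
        refine sum_le_sum_of_card_le_of_forall_le (by simpa using hR) ?_ ?_
        · intro k hk
          rw [hgain k (mem_range.mp hk)]
          exact marginal_nonneg hmono
        · intro y hy k hk
          have hk := mem_range.mp hk
          have hSB : S k ⊆ B := (union_subset_union_right fun y hy =>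
            List.mem_toFinset.mpr (List.take_subset k L (List.mem_toFinset.mp hy))).trans hB
          refine (marginal_anti hmono hsub hSB).trans ?_
          rw [hgain k hk]
          by_cases hyk : y ∈ L.take k
          · rw [marginal_of_mem (mem_union_right _ (List.mem_toFinset.mpr hyk))]
            exact marginal_nonneg hmono
          · exact hgreedy k hk y hy hyk
    _ = f (A ∪ L.toFinset) - f A := by
        rw [sum_range_sub (fun k => f (S k))]
        simp [S]

end Marginal

section Assignment

variable {U I : Type*} [DecidableEq U] [DecidableEq I]

def assignedPairs (pick : U → List I) (l : List U) : Finset (U × I) :=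
  (l.flatMap fun u => (pick u).map fun i => (u, i)).toFinset

theorem assignedPairs_mono (pick : U → List I) {l₁ l₂ : List U} (h : l₁ ⊆ l₂) :
    assignedPairs pick l₁ ⊆ assignedPairs pick l₂ := by
  intro x hx
  simp only [assignedPairs, List.mem_toFinset, List.mem_flatMap] at hx ⊢
  obtain ⟨u, hu, hx⟩ := hx
  exact ⟨u, h hu, hx⟩

theorem assignedPairs_take_add_one (pick : U → List I) {us : List U} {t : ℕ}
    (ht : t < us.length) :
    assignedPairs pick (us.take (t + 1)) =
      assignedPairs pick (us.take t) ∪ ((pick us[t]).map fun i => (us[t], i)).toFinset := by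
  simp only [assignedPairs, ← List.take_concat_get' us t ht, List.flatMap_append,
    List.toFinset_append, List.flatMap_singleton]

theorem sum_marginal_fiber_le {f : Finset (U × I) → ℝ} (hmono : Monotone f)
    (hsub : IsSubmodular f)
    {us : List U} {pick : U → List I} {Q : Finset (U × I)} {t : ℕ} (ht : t < us.length)
    (hQ : #{x ∈ Q | x.1 = us[t]} ≤ (pick us[t]).length)
    (hgreedy : ∀ k (hk : k < (pick us[t]).length) (j : I), j ∉ (pick us[t]).take k →
      marginal f (assignedPairs pick (us.take t) ∪
          (((pick us[t]).take k).map fun i => (us[t], i)).toFinset) (us[t], j) ≤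
        marginal f (assignedPairs pick (us.take t) ∪
          (((pick us[t]).take k).map fun i => (us[t], i)).toFinset) (us[t], (pick us[t])[k])) :
    ∑ x ∈ Q with us.idxOf x.1 = t, marginal f (assignedPairs pick us) x ≤
      f (assignedPairs pick (us.take (t + 1))) - f (assignedPairs pick (us.take t)) := by
  have hfiber : ∀ x ∈ Q, us.idxOf x.1 = t → x.1 = us[t] := by
    rintro x - rfl
    exact (List.getElem_idxOf ht).symm
  rw [assignedPairs_take_add_one pick ht]
  refine sum_marginal_le_of_greedy hmono hsub ?_ ?_ ?_
  · rw [← assignedPairs_take_add_one pick ht]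
    exact assignedPairs_mono pick (List.take_subset _ _)
  · rw [List.length_map]
    exact (card_le_card (monotone_filter_right Q fun x hx => hfiber x hx)).trans hQ
  · intro k hk y hy hyk
    obtain ⟨u, j⟩ := y
    obtain rfl : u = us[t] := hfiber _ (mem_filter.mp hy).1 (mem_filter.mp hy).2
    rw [← List.map_take] at hyk ⊢
    rw [List.getElem_map]
    refine hgreedy k (by simpa using hk) j fun hj => hyk ?_
    exact List.mem_map_of_mem hj

end Assignment

theorem locally_greedy_half_approx_general {U I : Type*}
    [DecidableEq U] [DecidableEq I]
    (f : Finset (U × I) → ℝ) (N : ℕ)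
    (hmono : ∀ A B : Finset (U × I), A ⊆ B → f A ≤ f B)
    (hsub : ∀ A B : Finset (U × I), A ⊆ B → ∀ x ∉ B,
      f (insert x B) - f B ≤ f (insert x A) - f A)
    (hempty : f ∅ = 0)
    (us : List U) (husall : ∀ u : U, u ∈ us)
    (pick : U → List I)
    (hlen : ∀ u, (pick u).length = N)
    (hgreedy : ∀ (t : ℕ) (ht : t < us.length) (k : ℕ) (hk : k < N) (j : I),
      j ∉ (pick (us.get ⟨t, ht⟩)).take k →
      f (insert (us.get ⟨t, ht⟩, j)
          (((us.take t).flatMap fun s => (pick s).map fun i => (s, i)).toFinset ∪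
           (((pick (us.get ⟨t, ht⟩)).take k).map
             fun i => (us.get ⟨t, ht⟩, i)).toFinset)) -
        f ((((us.take t).flatMap fun s => (pick s).map fun i => (s, i)).toFinset ∪
           (((pick (us.get ⟨t, ht⟩)).take k).map
             fun i => (us.get ⟨t, ht⟩, i)).toFinset)) ≤
      f (insert (us.get ⟨t, ht⟩,
            (pick (us.get ⟨t, ht⟩)).get ⟨k, (hlen (us.get ⟨t, ht⟩)).symm ▸ hk⟩)
          (((us.take t).flatMap fun s => (pick s).map fun i => (s, i)).toFinset ∪
           (((pick (us.get ⟨t, ht⟩)).take k).map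
             fun i => (us.get ⟨t, ht⟩, i)).toFinset)) -
        f ((((us.take t).flatMap fun s => (pick s).map fun i => (s, i)).toFinset ∪
           (((pick (us.get ⟨t, ht⟩)).take k).map
             fun i => (us.get ⟨t, ht⟩, i)).toFinset))) :
    ∀ Q : Finset (U × I), (∀ u : U, (Q.filter fun p => p.1 = u).card ≤ N) →
      f Q ≤ 2 * f ((us.flatMap fun u => (pick u).map fun i => (u, i)).toFinset) := by
  intro Q hQ
  have hmono' : Monotone f := fun A B h => hmono A B h
  set G := assignedPairs pick us
  have hidx : ∀ x ∈ Q, us.idxOf x.1 ∈ range us.length := fun x _ =>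
    mem_range.mpr (List.idxOf_lt_length_iff.mpr (husall x.1))
  calc f Q ≤ f (G ∪ Q) := hmono _ _ subset_union_right
    _ ≤ f G + ∑ x ∈ Q, marginal f G x := le_add_sum_marginal hmono' hsub G Q
    _ = f G + ∑ t ∈ range us.length, ∑ x ∈ Q with us.idxOf x.1 = t, marginal f G x := by
        rw [sum_fiberwise_of_maps_to hidx]
    _ ≤ f G + ∑ t ∈ range us.length,
          (f (assignedPairs pick (us.take (t + 1))) - f (assignedPairs pick (us.take t))) := by
        gcongr with t ht
        exact sum_marginal_fiber_le hmono' hsub (mem_range.mp ht) ((hQ _).trans (hlen _).ge)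
          fun k hk j => hgreedy t _ k (hlen _ ▸ hk) j
    _ = 2 * f G := by
        rw [sum_range_sub (fun t => f (assignedPairs pick (us.take t))), List.take_length,
          List.take_zero, show assignedPairs pick [] = ∅ from rfl, hempty]
        ring

/-- Fisher–Nemhauser–Wolsey: the locally greedy algorithm on a partition matroid
(process users in some order `us`; for each user greedily add N pairs from
{u} × I maximizing marginal gain) is a 1/2-approximation for maximizing a
submodular monotone increasing function f with f(∅) = 0, subject to the
constraint that each user receives at most N items. -/
theorem locally_greedy_half_approx {U I : Type*} [Fintype U] [Fintype I]
    [DecidableEq U] [DecidableEq I]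
    (f : Finset (U × I) → ℝ) (N : ℕ) (hN : N ≤ Fintype.card I)
    (hmono : ∀ A B : Finset (U × I), A ⊆ B → f A ≤ f B)
    (hsub : ∀ A B : Finset (U × I), A ⊆ B → ∀ x ∉ B,
      f (insert x B) - f B ≤ f (insert x A) - f A)
    (hempty : f ∅ = 0)
    (us : List U) (husnd : us.Nodup) (husall : ∀ u : U, u ∈ us)
    (pick : U → List I)
    (hlen : ∀ u, (pick u).length = N)
    (hpick : ∀ u, (pick u).Nodup)
    (hgreedy : ∀ (t : ℕ) (ht : t < us.length) (k : ℕ) (hk : k < N) (j : I),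
      j ∉ (pick (us.get ⟨t, ht⟩)).take k →
      f (insert (us.get ⟨t, ht⟩, j)
          (((us.take t).flatMap fun s => (pick s).map fun i => (s, i)).toFinset ∪
           (((pick (us.get ⟨t, ht⟩)).take k).map
             fun i => (us.get ⟨t, ht⟩, i)).toFinset)) -
        f ((((us.take t).flatMap fun s => (pick s).map fun i => (s, i)).toFinset ∪
           (((pick (us.get ⟨t, ht⟩)).take k).map
             fun i => (us.get ⟨t, ht⟩, i)).toFinset)) ≤
      f (insert (us.get ⟨t, ht⟩,
            (pick (us.get ⟨t, ht⟩)).get ⟨k, (hlen (us.get ⟨t, ht⟩)).symm ▸ hk⟩)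
          (((us.take t).flatMap fun s => (pick s).map fun i => (s, i)).toFinset ∪
           (((pick (us.get ⟨t, ht⟩)).take k).map
             fun i => (us.get ⟨t, ht⟩, i)).toFinset)) -
        f ((((us.take t).flatMap fun s => (pick s).map fun i => (s, i)).toFinset ∪
           (((pick (us.get ⟨t, ht⟩)).take k).map
             fun i => (us.get ⟨t, ht⟩, i)).toFinset))) :
    ∀ Q : Finset (U × I), (∀ u : U, (Q.filter fun p => p.1 = u).card ≤ N) →
      f Q ≤ 2 * f ((us.flatMap fun u => (pick u).map fun i => (u, i)).toFinset) :=
  locally_greedy_half_approx_general f N hmono hsub hempty us husall pick hlen hgreedy
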